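/- Let (X_i, Y_i), i = 1,…,n+Δ be i.i.d. pairs with joint distribution p on finite alphabets 𝒳 × 𝒴. Suppose B is a random variable taking values in a set of size at most 2^{(n+Δ)R} (the encoded bits), and X̃₁ⁿ is a random vector in 𝒳ⁿ such that X₁ⁿ is a deterministic function of (X̃₁ⁿ, B, Y₁^{n+Δ}) and B is a deterministic function of X₁^{n+Δ}. Then H(X̃₁ⁿ) ≥ n·H(X|Y) − (n+Δ)R, where H(X|Y) is the conditional entropy of X given Y under p. -/

import Mathlib

/-!
Because `X₁ⁿ` is recoverable, the pair `(X₁ⁿ, Y₁^{n+Δ})` is a function of `(X̃₁ⁿ, B, Y₁^{n+Δ})`.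
Its coordinates are independent, so its entropy is `n·H(X,Y) + Δ·H(Y)`, while subadditivity bounds
the entropy of `(X̃₁ⁿ, B, Y₁^{n+Δ})` by `H(X̃₁ⁿ) + (n+Δ)R + (n+Δ)·H(Y)`. Subtracting, and using
`H(X,Y) - H(Y) = H(X|Y)`, gives the bound.
-/

open scoped Classical

/-- Distribution of a random variable `f` on a finite probability space with pmf `P`. -/
noncomputable def distOf {Ω α : Type*} [Fintype Ω] [Fintype α]
    (P : Ω → ℝ) (f : Ω → α) (a : α) : ℝ :=
  ∑ ω ∈ Finset.univ.filter (fun ω => f ω = a), P ω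

/-- Shannon entropy (in bits) of a random variable `f` on a finite probability space. -/
noncomputable def entOf {Ω α : Type*} [Fintype Ω] [Fintype α]
    (P : Ω → ℝ) (f : Ω → α) : ℝ :=
  -∑ a, distOf P f a * Real.logb 2 (distOf P f a)

/-- Conditional Shannon entropy `H(X|Y)` (in bits) of a joint pmf on `𝒳 × 𝒴`. -/
noncomputable def condEnt {𝒳 𝒴 : Type*} [Fintype 𝒳] [Fintype 𝒴] (p : 𝒳 × 𝒴 → ℝ) : ℝ :=
  -∑ z : 𝒳 × 𝒴, p z * Real.logb 2 (p z / ∑ x, p (x, z.2))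

open Finset Real

section Distribution

variable {Ω α β : Type*} [Fintype Ω] [Fintype α] [Fintype β]

theorem distOf_nonneg {P : Ω → ℝ} (hP : ∀ ω, 0 ≤ P ω) (f : Ω → α) (a : α) :
    0 ≤ distOf P f a :=
  sum_nonneg fun ω _ => hP ω

theorem sum_distOf_mul (P : Ω → ℝ) (f : Ω → α) (φ : α → ℝ) :
    ∑ a, distOf P f a * φ a = ∑ ω, P ω * φ (f ω) := by
  simp only [distOf, sum_mul]
  rw [← sum_fiberwise univ f (fun ω => P ω * φ (f ω))]
  refine sum_congr rfl fun a _ => sum_congr rfl fun ω hω => ?_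
  rw [(mem_filter.mp hω).2]

theorem sum_distOf {P : Ω → ℝ} (hP : ∑ ω, P ω = 1) (f : Ω → α) : ∑ a, distOf P f a = 1 := by
  simpa [hP] using sum_distOf_mul P f 1

theorem card_pos_of_sum_eq_one {P : Ω → ℝ} (hP1 : ∑ ω, P ω = 1) (f : Ω → α) :
    0 < Fintype.card α := by
  by_contra h
  have : IsEmpty α := Fintype.card_eq_zero_iff.mp (Nat.eq_zero_of_not_pos h)
  simpa using sum_distOf hP1 f

theorem le_distOf_apply {P : Ω → ℝ} (hP : ∀ ω, 0 ≤ P ω) (f : Ω → α) (ω : Ω) :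
    P ω ≤ distOf P f (f ω) :=
  single_le_sum (fun ω _ => hP ω) (by simp)

theorem distOf_apply_eq_sum_mul_ite (P : Ω → ℝ) (f : Ω → α) (a : α) :
    distOf P f a = ∑ ω, P ω * if f ω = a then 1 else 0 := by
  simp [distOf, sum_filter]

theorem distOf_comp (P : Ω → ℝ) (f : Ω → α) (g : α → β) :
    distOf P (fun ω => g (f ω)) = distOf (distOf P f) g := by
  funext b
  rw [distOf_apply_eq_sum_mul_ite, distOf_apply_eq_sum_mul_ite, sum_distOf_mul]

theorem distOf_pi_map {ι : Type*} [Fintype ι] [DecidableEq ι] (q : α → ℝ) (g : ι → α → β) :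
    distOf (fun f : ι → α => ∏ i, q (f i)) (fun f i => g i (f i))
      = fun b => ∏ i, distOf q (g i) (b i) := by
  funext b
  simp only [distOf]
  rw [prod_univ_sum]
  congr 1
  ext f
  simp [funext_iff, Fintype.mem_piFinset]

theorem distOf_snd_apply {γ : Type*} [Fintype γ] (p : α × γ → ℝ) (c : γ) :
    distOf p Prod.snd c = ∑ a, p (a, c) := by
  rw [distOf_apply_eq_sum_mul_ite, Fintype.sum_prod_type_right]
  simp

end Distribution

noncomputable def ent {α : Type*} [Fintype α] (q : α → ℝ) : ℝ :=
  -∑ a, q a * logb 2 (q a)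

section Entropy

variable {Ω α β : Type*} [Fintype Ω] [Fintype α] [Fintype β]

theorem entOf_eq_ent (P : Ω → ℝ) (f : Ω → α) : entOf P f = ent (distOf P f) := rfl

theorem entOf_comp (P : Ω → ℝ) (f : Ω → α) (g : α → β) :
    entOf P (fun ω => g (f ω)) = entOf (distOf P f) g := by
  rw [entOf_eq_ent, distOf_comp, entOf_eq_ent]

theorem entOf_eq_neg_sum (P : Ω → ℝ) (f : Ω → α) :
    entOf P f = -∑ ω, P ω * logb 2 (distOf P f (f ω)) := by
  rw [entOf, sum_distOf_mul P f fun a => logb 2 (distOf P f a)]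

theorem entOf_le_ent {P : Ω → ℝ} (hP : ∀ ω, 0 ≤ P ω) (f : Ω → α) : entOf P f ≤ ent P := by
  rw [entOf_eq_neg_sum, ent, neg_le_neg_iff]
  refine sum_le_sum fun ω _ => ?_
  rcases (hP ω).eq_or_lt with h | h
  · simp [← h]
  · exact mul_le_mul_of_nonneg_left
      (logb_le_logb_of_le one_lt_two h (le_distOf_apply hP f ω)) (hP ω)

theorem distOf_apply_of_injective (P : Ω → ℝ) {f : Ω → α} (hf : f.Injective) (ω : Ω) :
    distOf P f (f ω) = P ω := by
  simp [distOf, hf.eq_iff, sum_filter]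

theorem entOf_eq_ent_of_injective (P : Ω → ℝ) {f : Ω → α} (hf : f.Injective) :
    entOf P f = ent P := by
  simp only [entOf_eq_neg_sum, ent, distOf_apply_of_injective P hf]

theorem entOf_comp_le {P : Ω → ℝ} (hP : ∀ ω, 0 ≤ P ω) (f : Ω → α) (g : α → β) :
    entOf P (fun ω => g (f ω)) ≤ entOf P f := by
  rw [entOf_comp]
  exact entOf_le_ent (distOf_nonneg hP f) g

theorem ent_le_neg_sum_mul_logb {d q : α → ℝ} (hd0 : ∀ a, 0 ≤ d a) (hd1 : ∑ a, d a = 1)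
    (hq0 : ∀ a, 0 ≤ q a) (hq1 : ∑ a, q a ≤ 1) (hsupp : ∀ a, 0 < d a → 0 < q a) :
    ent d ≤ -∑ a, d a * logb 2 (q a) := by
  have hlog2 : 0 < log 2 := log_pos one_lt_two
  have termwise : ∀ a, d a * logb 2 (q a) - d a * logb 2 (d a) ≤ (q a - d a) / log 2 := by
    intro a
    rcases (hd0 a).eq_or_lt with h | h
    · simpa [← h] using div_nonneg (hq0 a) hlog2.le
    · have hq : 0 < q a := hsupp a h
      calc d a * logb 2 (q a) - d a * logb 2 (d a) = d a * log (q a / d a) / log 2 := by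
            rw [log_div hq.ne' h.ne', logb, logb]; ring
        _ ≤ d a * (q a / d a - 1) / log 2 := by
            gcongr; exact log_le_sub_one_of_pos (div_pos hq h)
        _ = (q a - d a) / log 2 := by field_simp
  have hsum := sum_le_sum fun a (_ : a ∈ univ) => termwise a
  rw [← sum_div, sum_sub_distrib, sum_sub_distrib, hd1] at hsum
  have : (∑ a, q a - 1) / log 2 ≤ 0 := div_nonpos_of_nonpos_of_nonneg (by linarith) hlog2.le
  rw [ent]
  linarith

theorem entOf_le_logb_card {P : Ω → ℝ} (hP : ∀ ω, 0 ≤ P ω) (hP1 : ∑ ω, P ω = 1) (f : Ω → α) :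
    entOf P f ≤ logb 2 (Fintype.card α) := by
  have hcard : (0 : ℝ) < Fintype.card α := mod_cast card_pos_of_sum_eq_one hP1 f
  have hgibbs := ent_le_neg_sum_mul_logb (distOf_nonneg hP f) (sum_distOf hP1 f)
    (q := fun _ => (Fintype.card α : ℝ)⁻¹) (fun _ => by positivity)
    (by simp [hcard.ne']) (fun _ _ => by positivity)
  rwa [← sum_mul, sum_distOf hP1 f, one_mul, logb_inv, neg_neg] at hgibbs

theorem entOf_le_of_card_le_two_rpow {P : Ω → ℝ} (hP : ∀ ω, 0 ≤ P ω) (hP1 : ∑ ω, P ω = 1)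
    (f : Ω → α) {r : ℝ} (hcard : (Fintype.card α : ℝ) ≤ 2 ^ r) : entOf P f ≤ r :=
  calc entOf P f ≤ logb 2 (Fintype.card α) := entOf_le_logb_card hP hP1 f
    _ ≤ logb 2 (2 ^ r) :=
      logb_le_logb_of_le one_lt_two (mod_cast card_pos_of_sum_eq_one hP1 f) hcard
    _ = r := logb_rpow two_pos (by norm_num)

theorem entOf_pair_le {P : Ω → ℝ} (hP : ∀ ω, 0 ≤ P ω) (hP1 : ∑ ω, P ω = 1)
    (f : Ω → α) (g : Ω → β) :
    entOf P (fun ω => (f ω, g ω)) ≤ entOf P f + entOf P g := by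
  set D := distOf P (fun ω => (f ω, g ω))
  have hD0 : ∀ z, 0 ≤ D z := distOf_nonneg hP _
  have hfst : distOf D Prod.fst = distOf P f := (distOf_comp _ _ Prod.fst).symm
  have hsnd : distOf D Prod.snd = distOf P g := (distOf_comp _ _ Prod.snd).symm
  have hDf : ∀ z, D z ≤ distOf P f z.1 := fun z => hfst ▸ le_distOf_apply hD0 Prod.fst z
  have hDg : ∀ z, D z ≤ distOf P g z.2 := fun z => hsnd ▸ le_distOf_apply hD0 Prod.snd z
  have hgibbs := ent_le_neg_sum_mul_logb hD0 (sum_distOf hP1 _)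
    (q := fun z => distOf P f z.1 * distOf P g z.2)
    (fun z => mul_nonneg (distOf_nonneg hP f _) (distOf_nonneg hP g _))
    (by rw [Fintype.sum_prod_type, ← Fintype.sum_mul_sum, sum_distOf hP1, sum_distOf hP1,
      one_mul])
    (fun z hz => mul_pos (hz.trans_le (hDf z)) (hz.trans_le (hDg z)))
  have hlog_split : ∀ z, D z * logb 2 (distOf P f z.1 * distOf P g z.2)
      = D z * logb 2 (distOf P f z.1) + D z * logb 2 (distOf P g z.2) := by
    intro z
    rcases (hD0 z).eq_or_lt with h | h
    · simp [← h]
    · rw [logb_mul (h.trans_le (hDf z)).ne' (h.trans_le (hDg z)).ne']; ring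
  have hcross_f := sum_distOf_mul D Prod.fst fun a => logb 2 (distOf P f a)
  have hcross_g := sum_distOf_mul D Prod.snd fun b => logb 2 (distOf P g b)
  rw [hfst] at hcross_f
  rw [hsnd] at hcross_g
  rw [sum_congr rfl fun z _ => hlog_split z, sum_add_distrib, ← hcross_f, ← hcross_g]
    at hgibbs
  rw [entOf_eq_ent, entOf, entOf]
  linarith

end Entropy

section Product

variable {α β : Type*} [Fintype α] [Fintype β]

theorem mul_mul_logb_mul (x y : ℝ) :
    x * y * logb 2 (x * y) = y * (x * logb 2 x) + x * (y * logb 2 y) := by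
  rcases eq_or_ne x 0 with rfl | hx
  · simp
  rcases eq_or_ne y 0 with rfl | hy
  · simp
  rw [logb_mul hx hy]
  ring

theorem ent_mul {q₁ : α → ℝ} {q₂ : β → ℝ} (h₁ : ∑ a, q₁ a = 1) (h₂ : ∑ b, q₂ b = 1) :
    ent (fun z : α × β => q₁ z.1 * q₂ z.2) = ent q₁ + ent q₂ := by
  simp only [ent, mul_mul_logb_mul, Fintype.sum_prod_type, sum_add_distrib, ← mul_sum,
    ← sum_mul, h₁, h₂]
  ring

theorem ent_comp_equiv (e : β ≃ α) (q : α → ℝ) : ent (fun b => q (e b)) = ent q := by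
  rw [ent, ent, e.sum_comp fun a => q a * logb 2 (q a)]

theorem sum_prod_apply_eq_one {ι : Type*} [Fintype ι] [DecidableEq ι] {q : ι → α → ℝ}
    (hq : ∀ i, ∑ a, q i a = 1) : ∑ b : ι → α, ∏ i, q i (b i) = 1 := by
  rw [← Fintype.prod_sum]
  simp [hq]

theorem ent_pi {m : ℕ} {q : Fin m → α → ℝ} (hq : ∀ i, ∑ a, q i a = 1) :
    ent (fun b : Fin m → α => ∏ i, q i (b i)) = ∑ i, ent (q i) := by
  induction m with
  | zero => simp [ent]
  | succ k ih =>
    rw [← ent_comp_equiv (Fin.consEquiv fun _ => α)]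
    simp only [Fin.consEquiv_apply, Fin.prod_univ_succ, Fin.cons_zero, Fin.cons_succ]
    have htail : ∑ b : Fin k → α, ∏ i, q i.succ (b i) = 1 :=
      sum_prod_apply_eq_one fun i : Fin k => hq i.succ
    have hsplit := ent_mul (hq 0) htail
    rw [Fin.sum_univ_succ, ← ih fun i : Fin k => hq i.succ, ← hsplit]

end Product

theorem condEnt_eq_ent_sub {α γ : Type*} [Fintype α] [Fintype γ] {p : α × γ → ℝ}
    (hp : ∀ z, 0 ≤ p z) : condEnt p = ent p - ent (distOf p Prod.snd) := by
  have hcross := sum_distOf_mul p Prod.snd fun c => logb 2 (distOf p Prod.snd c)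
  have hlog_split : ∀ z, p z * logb 2 (p z / ∑ a, p (a, z.2))
      = p z * logb 2 (p z) - p z * logb 2 (distOf p Prod.snd z.2) := by
    intro z
    rw [← distOf_snd_apply]
    rcases (hp z).eq_or_lt with h | h
    · simp [← h]
    · rw [logb_div h.ne' (h.trans_le (le_distOf_apply hp Prod.snd z)).ne']
      ring
  rw [condEnt, ent, ent, sum_congr rfl fun z _ => hlog_split z, sum_sub_distrib, hcross]
  ring

section IID

variable {Ω α β γ : Type*} [Fintype Ω] [Fintype α] [Fintype β] [Fintype γ]

theorem entOf_pi_map_of_iid {m : ℕ} {P : Ω → ℝ} {Z : Ω → Fin m → α} {q : α → ℝ}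
    (hZ : ∀ f, distOf P Z f = ∏ i, q (f i)) (hq : ∑ a, q a = 1) (g : Fin m → α → β) :
    entOf P (fun ω i => g i (Z ω i)) = ∑ i, entOf q (g i) := by
  rw [entOf_comp P Z fun f i => g i (f i), funext hZ, entOf_eq_ent, distOf_pi_map,
    ent_pi fun i => sum_distOf hq (g i)]
  rfl

def maskFst (keep : Prop) [Decidable keep] (z : α × γ) : Option α × γ :=
  (if keep then some z.1 else none, z.2)

theorem entOf_maskFst (p : α × γ → ℝ) (keep : Prop) [Decidable keep] :
    entOf p (maskFst keep) = if keep then ent p else ent (distOf p Prod.snd) := by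
  split_ifs with h
  · refine entOf_eq_ent_of_injective p fun z z' hzz' => ?_
    simpa [maskFst, h, Prod.ext_iff] using hzz'
  · have hmask : maskFst keep = fun z : α × γ => ((none : Option α), z.2) := by
      funext z; simp [maskFst, h]
    rw [hmask, entOf_comp, entOf_eq_ent_of_injective]
    exact fun c c' hcc' => (Prod.ext_iff.mp hcc').2

end IID

theorem feedforward_error_entropy_bound
    {Ω 𝒳 𝒴 β : Type*} [Fintype Ω] [Fintype 𝒳] [Fintype 𝒴] [Fintype β]
    (n Δ : ℕ) (R : ℝ)
    (P : Ω → ℝ) (hP : ∀ ω, 0 ≤ P ω) (hPsum : ∑ ω, P ω = 1)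
    (p : 𝒳 × 𝒴 → ℝ) (hp : ∀ z, 0 ≤ p z) (hpsum : ∑ z, p z = 1)
    (X : Fin (n + Δ) → Ω → 𝒳) (Y : Fin (n + Δ) → Ω → 𝒴)
    (hiid : ∀ f : Fin (n + Δ) → 𝒳 × 𝒴,
      distOf P (fun ω i => (X i ω, Y i ω)) f = ∏ i, p (f i))
    (B : Ω → β)
    (hcard : (Fintype.card β : ℝ) ≤ 2 ^ (((n : ℝ) + (Δ : ℝ)) * R))
    (Xt : Ω → Fin n → 𝒳)
    (hdec : ∃ g : (Fin n → 𝒳) × β × (Fin (n + Δ) → 𝒴) → Fin n → 𝒳,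
      ∀ ω, (fun i : Fin n => X (Fin.castAdd Δ i) ω)
        = g (Xt ω, B ω, fun i => Y i ω)) :
    entOf P Xt ≥ (n : ℝ) * condEnt p - ((n : ℝ) + (Δ : ℝ)) * R := by
  obtain ⟨g, hg⟩ := hdec
  set Yv : Ω → Fin (n + Δ) → 𝒴 := fun ω i => Y i ω
  -- `(X₁ⁿ, Y₁^{n+Δ})`, encoded coordinatewise so that its entropy splits over the i.i.d. pairs
  set obs : Ω → Fin (n + Δ) → Option 𝒳 × 𝒴 := fun ω i => maskFst ((i : ℕ) < n) (X i ω, Y i ω)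
  have hobs : entOf P obs = n * ent p + Δ * ent (distOf p Prod.snd) := by
    rw [entOf_pi_map_of_iid hiid hpsum, Fin.sum_univ_add]
    simp [entOf_maskFst]
  have hYv : entOf P Yv = (n + Δ) * ent (distOf p Prod.snd) := by
    rw [entOf_pi_map_of_iid hiid hpsum fun _ => Prod.snd]
    simp [entOf_eq_ent]
  have hB := entOf_le_of_card_le_two_rpow hP hPsum B hcard
  let decode (w : (Fin n → 𝒳) × β × (Fin (n + Δ) → 𝒴)) (i : Fin (n + Δ)) : Option 𝒳 × 𝒴 :=
    if h : (i : ℕ) < n then (some (g w ⟨i, h⟩), w.2.2 i) else (none, w.2.2 i)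
  have hdecode : obs = fun ω => decode (Xt ω, B ω, Yv ω) := by
    funext ω i
    by_cases h : (i : ℕ) < n
    · simpa [obs, decode, maskFst, h, Yv] using congrFun (hg ω) ⟨i, h⟩
    · simp [obs, decode, maskFst, h, Yv]
  have hrecover : entOf P obs ≤ entOf P fun ω => (Xt ω, B ω, Yv ω) := by
    rw [hdecode]
    exact entOf_comp_le hP (fun ω => (Xt ω, B ω, Yv ω)) decode
  have hXt := entOf_pair_le hP hPsum Xt fun ω => (B ω, Yv ω)
  have hBY := entOf_pair_le hP hPsum B Yv
  rw [condEnt_eq_ent_sub hp, ge_iff_le]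
  linarith
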